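/- arXiv:1605.04564 — 4 statements merged into one kernel-verified Lean document; each statement's English description precedes it below -/
import Mathlib

section
/- Let 0 < n < 1 and define f(x) = (1/2)(−(1 + nx²) + √((1 + nx²)² + 4(1−n)x²)) for x > 0. Then f is strictly increasing on (0, ∞). In particular the positive eigenvalues λ⁺_j(n) = f(πj) are strictly increasing in the integer j ≥ 1 (Lemma 3.1(i)). -/
/-!
`f x` is the larger root of `p_x(λ) = λ² + (1 + n x²) λ - (1 - n) x²`. Its value `λ = f x` is
positive and satisfies `n λ < 1 - n`, so the coefficient `n λ - (1 - n)` of `x²` in `p_x(λ)` is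
negative. Hence for `x < y` we get `p_y(λ) < p_x(λ) = 0`, and a monic quadratic is negative only
to the left of its larger root: `f x = λ < f y`.
-/

open Real

/-- `λ⁺_j(n)`: the larger root of the characteristic polynomial of the `j`-th Fourier mode. -/
noncomputable def lamPlus (n : ℝ) (j : ℕ) : ℝ :=
  (1 / 2) * (-(1 + n * π ^ 2 * (j : ℝ) ^ 2) +
    Real.sqrt ((1 + n * π ^ 2 * (j : ℝ) ^ 2) ^ 2 + 4 * (1 - n) * π ^ 2 * (j : ℝ) ^ 2))

/-- The larger root of `X ^ 2 + b * X - c`. -/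
noncomputable def quadRoot (b c : ℝ) : ℝ :=
  (1 / 2) * (-b + √(b ^ 2 + 4 * c))

section quadRoot

variable {b c : ℝ}

theorem quadRoot_sq_add_mul_sub (hd : 0 ≤ b ^ 2 + 4 * c) :
    quadRoot b c ^ 2 + b * quadRoot b c - c = 0 := by
  have hs := Real.sq_sqrt hd
  unfold quadRoot
  linear_combination (1 / 4 : ℝ) * hs

theorem two_mul_quadRoot_add_nonneg (b c : ℝ) : 0 ≤ 2 * quadRoot b c + b := by
  have := Real.sqrt_nonneg (b ^ 2 + 4 * c)
  unfold quadRoot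
  linarith

theorem quadRoot_pos (hc : 0 < c) : 0 < quadRoot b c := by
  have hb : b < √(b ^ 2 + 4 * c) :=
    calc b ≤ |b| := le_abs_self b
      _ = √(b ^ 2) := (Real.sqrt_sq_eq_abs b).symm
      _ < √(b ^ 2 + 4 * c) := Real.sqrt_lt_sqrt (sq_nonneg b) (by linarith)
  unfold quadRoot
  linarith

/-- Factor `X ^ 2 + b X - c = (X - r) (X - r')` with `r' = -b - r ≤ r`. -/
theorem lt_quadRoot_of_neg {x : ℝ} (hd : 0 ≤ b ^ 2 + 4 * c) (hx : x ^ 2 + b * x - c < 0) :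
    x < quadRoot b c := by
  have hr := quadRoot_sq_add_mul_sub hd
  have hr' := two_mul_quadRoot_add_nonneg b c
  by_contra! hle
  nlinarith [mul_nonneg (sub_nonneg.mpr hle) (by linarith : 0 ≤ x + b + quadRoot b c)]

end quadRoot

theorem strictMonoOn_quadRoot {n : ℝ} (hn : n < 1) :
    StrictMonoOn (fun x : ℝ => quadRoot (1 + n * x ^ 2) ((1 - n) * x ^ 2)) (Set.Ioi 0) := by
  intro x hx y hy hxy
  have hd : ∀ z : ℝ, 0 ≤ (1 + n * z ^ 2) ^ 2 + 4 * ((1 - n) * z ^ 2) := fun z => by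
    have : 0 ≤ (1 - n) * z ^ 2 := mul_nonneg (by linarith) (sq_nonneg z)
    positivity
  have hx2 : 0 < x ^ 2 := pow_pos hx 2
  have hxy2 : x ^ 2 < y ^ 2 := pow_lt_pow_left₀ hxy (le_of_lt hx) two_ne_zero
  set l := quadRoot (1 + n * x ^ 2) ((1 - n) * x ^ 2)
  have hroot : l ^ 2 + (1 + n * x ^ 2) * l - (1 - n) * x ^ 2 = 0 := quadRoot_sq_add_mul_sub (hd x)
  have hl : 0 < l := quadRoot_pos (mul_pos (by linarith) hx2)
  have hnl : n * l < 1 - n := by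
    have : n * l * x ^ 2 < (1 - n) * x ^ 2 := by nlinarith
    exact lt_of_mul_lt_mul_right this hx2.le
  refine lt_quadRoot_of_neg (hd y) ?_
  have hneg : (y ^ 2 - x ^ 2) * (n * l - (1 - n)) < 0 :=
    mul_neg_of_pos_of_neg (by linarith) (by linarith)
  linear_combination hroot + hneg

theorem stmt3_general (n : ℝ) (hn1 : n < 1) (f : ℝ → ℝ)
    (hf : ∀ x : ℝ, f x = (1 / 2) * (-(1 + n * x ^ 2) +
      Real.sqrt ((1 + n * x ^ 2) ^ 2 + 4 * (1 - n) * x ^ 2))) :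
    StrictMonoOn f (Set.Ioi (0 : ℝ)) ∧
    (∀ j : ℕ, 1 ≤ j → lamPlus n j = f (π * (j : ℝ))) ∧
    (∀ j k : ℕ, 1 ≤ j → j < k → lamPlus n j < lamPlus n k) := by
  have hmono : StrictMonoOn f (Set.Ioi 0) := by
    have hfq : f = fun x : ℝ => quadRoot (1 + n * x ^ 2) ((1 - n) * x ^ 2) :=
      funext fun x => by rw [hf, quadRoot, mul_assoc 4]
    exact hfq ▸ strictMonoOn_quadRoot hn1
  have hlam : ∀ j : ℕ, lamPlus n j = f (π * j) := fun j => by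
    rw [hf, lamPlus]
    ring_nf
  refine ⟨hmono, fun j _ => hlam j, fun j k hj hjk => ?_⟩
  have hj' : (0 : ℝ) < j := by exact_mod_cast hj
  have hjk' : (j : ℝ) < k := by exact_mod_cast hjk
  rw [hlam, hlam]
  exact hmono (Set.mem_Ioi.mpr (by positivity)) (Set.mem_Ioi.mpr (by nlinarith [pi_pos]))
    (mul_lt_mul_of_pos_left hjk' pi_pos)

theorem stmt3 (n : ℝ) (hn0 : 0 < n) (hn1 : n < 1) (f : ℝ → ℝ)
    (hf : ∀ x : ℝ, f x = (1 / 2) * (-(1 + n * x ^ 2) +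
      Real.sqrt ((1 + n * x ^ 2) ^ 2 + 4 * (1 - n) * x ^ 2))) :
    StrictMonoOn f (Set.Ioi (0 : ℝ)) ∧
    (∀ j : ℕ, 1 ≤ j → lamPlus n j = f (π * (j : ℝ))) ∧
    (∀ j k : ℕ, 1 ≤ j → j < k → lamPlus n j < lamPlus n k) :=
  stmt3_general n hn1 f hf
end

section
/- Let 0 < n < 1 and λ ≠ 0, and let ṽ, γ̃, σ̃ : ℝ → ℝ be differentiable with ṽ > 0, γ̃ > 0, σ̃ > 0 satisfying the tilde system: σ̃' = −(1 − n/(2−n))σ̃ + (λn/(2−n))ṽ + λ(σ̃γ̃)^{1/n}, γ̃' = (1/λ)((σ̃γ̃)^{1/n} − γ̃), ṽ' = (σ̃γ̃)^{1/n} + (n/(2−n))ṽ. Define p = γ̃/σ̃, q = nṽ/σ̃, r = (σ̃ γ̃^{1−n})^{1/n}. Then (p, q, r) satisfies the (p,q,r) system: p' = p((r−1)/λ + 1 − n/(2−n) − λpr − λq/(2−n)), q' = q(1 − λpr − λq/(2−n)) + npr, n r' = r((1−n)(r−1)/λ − 1 + n/(2−n) + λpr + λq/(2−n)). -/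
/-!
The choice of `r` turns the nonlinearity of the tilde system into `(σ̃ γ̃)^{1/n} = r γ̃`.
Each of `p`, `q`, `r` is a monomial in `σ̃, γ̃, ṽ`, so its derivative comes from the quotient and
power rules; substituting the tilde system together with `(σ̃ γ̃)^{1/n} = r γ̃` leaves an
expression in `p`, `q`, `r` alone, and the three identities are then field identities.
-/

open Real

lemma mul_rpow_one_div_eq {s g n : ℝ} (hs : 0 ≤ s) (hg : 0 < g) (hn : n ≠ 0) :
    (s * g) ^ (1 / n) = (s * g ^ (1 - n)) ^ (1 / n) * g := by
  rw [mul_rpow hs (rpow_nonneg hg.le _), ← rpow_mul hg.le, mul_assoc, ← rpow_add_one hg.ne',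
    mul_rpow hs hg.le]
  congr 2
  field_simp
  ring

theorem HasDerivAt.mul_rpow_const_rpow_const {f g : ℝ → ℝ} {f' g' x : ℝ} (a b : ℝ)
    (hf : HasDerivAt f f' x) (hg : HasDerivAt g g' x) (hfx : 0 < f x) (hgx : 0 < g x) :
    HasDerivAt (fun y => (f y * g y ^ a) ^ b)
      ((f x * g x ^ a) ^ b * (b * (f' / f x + a * (g' / g x)))) x := by
  have hu : 0 < f x * g x ^ a := mul_pos hfx (rpow_pos_of_pos hgx a)
  refine ((hf.mul (hg.rpow_const (Or.inl hgx.ne'))).rpow_const (Or.inl hu.ne')).congr_deriv ?_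
  simp only [Pi.mul_apply]
  rw [rpow_sub_one hu.ne', rpow_sub_one hgx.ne']
  field_simp

theorem stmt14_general (n lam : ℝ) (hn0 : 0 < n)
    (vt gt st : ℝ → ℝ)
    (hvt_diff : Differentiable ℝ vt)
    (hgt_diff : Differentiable ℝ gt)
    (hst_diff : Differentiable ℝ st)
    (hgt_pos : ∀ η : ℝ, 0 < gt η)
    (hst_pos : ∀ η : ℝ, 0 < st η)
    (hsys : ∀ η : ℝ,
      deriv st η = -(1 - n / (2 - n)) * st η + (lam * n / (2 - n)) * vt η
          + lam * (st η * gt η) ^ (1 / n) ∧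
      deriv gt η = (1 / lam) * ((st η * gt η) ^ (1 / n) - gt η) ∧
      deriv vt η = (st η * gt η) ^ (1 / n) + (n / (2 - n)) * vt η)
    (p q r : ℝ → ℝ)
    (hp : ∀ η : ℝ, p η = gt η / st η)
    (hq : ∀ η : ℝ, q η = n * vt η / st η)
    (hr : ∀ η : ℝ, r η = (st η * gt η ^ (1 - n)) ^ (1 / n)) :
    ∀ η : ℝ,
      deriv p η = p η * ((r η - 1) / lam + 1 - n / (2 - n)
          - lam * p η * r η - lam * q η / (2 - n)) ∧
      deriv q η = q η * (1 - lam * p η * r η - lam * q η / (2 - n)) + n * p η * r η ∧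
      n * deriv r η = r η * ((1 - n) * (r η - 1) / lam - 1 + n / (2 - n)
          + lam * p η * r η + lam * q η / (2 - n)) := by
  intro η
  have hs := hst_pos η
  have hg := hgt_pos η
  have hv := (hvt_diff η).hasDerivAt
  have hs' := (hst_diff η).hasDerivAt
  have hg' := (hgt_diff η).hasDerivAt
  have hdp : deriv p η = (deriv gt η * st η - gt η * deriv st η) / st η ^ 2 := by
    rw [funext hp]
    exact (hg'.div hs' hs.ne').deriv
  have hdq : deriv q η = (n * deriv vt η * st η - n * vt η * deriv st η) / st η ^ 2 := by
    rw [funext hq]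
    exact ((hv.const_mul n).div hs' hs.ne').deriv
  have hdr : deriv r η = r η * (1 / n * (deriv st η / st η + (1 - n) * (deriv gt η / gt η))) := by
    rw [funext hr]
    exact (hs'.mul_rpow_const_rpow_const (1 - n) (1 / n) hg' hs hg).deriv
  have hrg : (st η * gt η) ^ (1 / n) = r η * gt η := hr η ▸ mul_rpow_one_div_eq hs.le hg hn0.ne'
  obtain ⟨hds, hdg, hdv⟩ := hsys η
  rw [hrg] at hds hdg hdv
  rw [hdp, hdq, hdr, hds, hdg, hdv, hp, hq]
  refine ⟨?_, ?_, ?_⟩ <;> field_simp <;> ring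

/-- the transformation `p = γ̃/σ̃`, `q = nṽ/σ̃`, `r = (σ̃ γ̃^{1-n})^{1/n}`
turns the tilde system into the autonomous `(p,q,r)` system. -/
theorem stmt14 (n lam : ℝ) (hn0 : 0 < n) (hn1 : n < 1) (hlam : lam ≠ 0)
    (vt gt st : ℝ → ℝ)
    (hvt_diff : Differentiable ℝ vt)
    (hgt_diff : Differentiable ℝ gt)
    (hst_diff : Differentiable ℝ st)
    (hvt_pos : ∀ η : ℝ, 0 < vt η)
    (hgt_pos : ∀ η : ℝ, 0 < gt η)
    (hst_pos : ∀ η : ℝ, 0 < st η)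
    (hsys : ∀ η : ℝ,
      deriv st η = -(1 - n / (2 - n)) * st η + (lam * n / (2 - n)) * vt η
          + lam * (st η * gt η) ^ (1 / n) ∧
      deriv gt η = (1 / lam) * ((st η * gt η) ^ (1 / n) - gt η) ∧
      deriv vt η = (st η * gt η) ^ (1 / n) + (n / (2 - n)) * vt η)
    (p q r : ℝ → ℝ)
    (hp : ∀ η : ℝ, p η = gt η / st η)
    (hq : ∀ η : ℝ, q η = n * vt η / st η)
    (hr : ∀ η : ℝ, r η = (st η * gt η ^ (1 - n)) ^ (1 / n)) :
    ∀ η : ℝ,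
      deriv p η = p η * ((r η - 1) / lam + 1 - n / (2 - n)
          - lam * p η * r η - lam * q η / (2 - n)) ∧
      deriv q η = q η * (1 - lam * p η * r η - lam * q η / (2 - n)) + n * p η * r η ∧
      n * deriv r η = r η * ((1 - n) * (r η - 1) / lam - 1 + n / (2 - n)
          + lam * p η * r η + lam * q η / (2 - n)) :=
  stmt14_general n lam hn0 vt gt st hvt_diff hgt_diff hst_diff hgt_pos hst_pos hsys p q r hp hq hr
end

section
/- Let 0 < n < 1 and λ > 0 with λ ≠ (2−n)/(2(1−n)) (equivalently λ ≠ 1 + n/(2(1−n))). Then a point (p, q, r) ∈ ℝ³ is an equilibrium of the (p,q,r) system (i.e. all three right-hand sides vanish at it) if and only if (p, q, r) equals one of M₀ = (0, 0, 1 + 2λ/(2−n)), M₁ = (0, (2−n)/λ, 1 − nλ/((2−n)(1−n))), M₂ = (0, (2−n)/λ, 0), M₃ = (0, 0, 0). -/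
/-!
Writing `A` and `B` for the brackets in the `p'` and `r'` equations, `A + B = (2 - n)(r - 1)/λ`.
Hence off the plane `p = 0` the equation `A = 0` forces `r(r - 1) = 0`: on `r = 0` one is left with
`λ = (2 - n)/(2(1 - n))` or a sum of positive terms vanishing, and on `r = 1` the `q'` equation
gives `q = -(2 - n)p`, which turns `A = 0` into `n = 1`. On `p = 0` the system decouples:
`q(1 - λq/(2 - n)) = 0`, and then `r` solves a product of `r` and a linear factor.
-/

lemma eq_zero_or_eq_div_of_mul_one_sub_eq_zero {a b q : ℝ} (ha : a ≠ 0) (hb : b ≠ 0)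
    (h : q * (1 - a * q / b) = 0) : q = 0 ∨ q = b / a := by
  refine (mul_eq_zero.mp h).imp id fun h => ?_
  field_simp at h ⊢
  linarith

lemma eq_zero_or_eq_of_mul_linear_eq_zero {c d lam r : ℝ} (hc : c ≠ 0) (hlam : lam ≠ 0)
    (h : r * (c * (r - 1) / lam + d) = 0) : r = 0 ∨ r = 1 - lam * d / c := by
  refine (mul_eq_zero.mp h).imp id fun h => ?_
  field_simp at h ⊢
  linarith

lemma p_eq_zero_of_equilibrium {n lam p q r : ℝ} (hn0 : 0 < n) (hn1 : n < 1) (hlam : 0 < lam)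
    (hne : lam ≠ (2 - n) / (2 * (1 - n)))
    (hP : p * ((r - 1) / lam + 1 - n / (2 - n) - lam * p * r - lam * q / (2 - n)) = 0)
    (hQ : q * (1 - lam * p * r - lam * q / (2 - n)) + n * p * r = 0)
    (hR : r * ((1 - n) * (r - 1) / lam - 1 + n / (2 - n) + lam * p * r + lam * q / (2 - n)) = 0) :
    p = 0 := by
  have hs : 0 < 2 - n := by linarith
  by_contra hp
  have hA := (mul_eq_zero.mp hP).resolve_left hp
  have hr : r * (r - 1) = 0 := by
    have h : (2 - n) / lam * (r * (r - 1)) = 0 := by linear_combination hR + r * hA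
    exact (mul_eq_zero.mp h).resolve_left (by positivity)
  rcases mul_eq_zero.mp hr with rfl | hr1
  · have hq : q * (1 - lam * q / (2 - n)) = 0 := by linear_combination hQ
    rcases eq_zero_or_eq_div_of_mul_one_sub_eq_zero hlam.ne' hs.ne' hq with rfl | rfl
    · apply hne
      rw [eq_div_iff (by linarith)]
      field_simp at hA
      linarith
    · have : 0 < 1 / lam + n / (2 - n) := by positivity
      field_simp at hA this
      linarith
  · obtain rfl : r = 1 := by linarith
    have hpq : n * (p + q / (2 - n)) = 0 := by linear_combination hQ - q * hA
    have hpq' := (mul_eq_zero.mp hpq).resolve_left hn0.ne'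
    have h1 : 1 - n / (2 - n) = 0 := by linear_combination hA + lam * hpq'
    field_simp at h1
    linarith

/-- classification of the equilibria of the `(p,q,r)` system. -/
theorem stmt15 (n lam : ℝ) (hn0 : 0 < n) (hn1 : n < 1) (hlam : 0 < lam)
    (hne : lam ≠ (2 - n) / (2 * (1 - n))) :
    ∀ p q r : ℝ,
      (p * ((r - 1) / lam + 1 - n / (2 - n) - lam * p * r - lam * q / (2 - n)) = 0 ∧
       q * (1 - lam * p * r - lam * q / (2 - n)) + n * p * r = 0 ∧
       r * ((1 - n) * (r - 1) / lam - 1 + n / (2 - n) + lam * p * r + lam * q / (2 - n)) = 0)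
      ↔ ((p, q, r) = (0, 0, 1 + 2 * lam / (2 - n)) ∨
         (p, q, r) = (0, (2 - n) / lam, 1 - n * lam / ((2 - n) * (1 - n))) ∨
         (p, q, r) = (0, (2 - n) / lam, 0) ∨
         (p, q, r) = ((0 : ℝ), (0 : ℝ), (0 : ℝ))) := by
  have hs : 0 < 2 - n := by linarith
  have h1n : 1 - n ≠ 0 := by linarith
  intro p q r
  constructor
  · rintro ⟨hP, hQ, hR⟩
    obtain rfl := p_eq_zero_of_equilibrium hn0 hn1 hlam hne hP hQ hR
    have hq : q * (1 - lam * q / (2 - n)) = 0 := by linear_combination hQ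
    rcases eq_zero_or_eq_div_of_mul_one_sub_eq_zero hlam.ne' hs.ne' hq with rfl | rfl
    · have hr : r * ((1 - n) * (r - 1) / lam + (n / (2 - n) - 1)) = 0 := by linear_combination hR
      rcases eq_zero_or_eq_of_mul_linear_eq_zero h1n hlam.ne' hr with rfl | rfl
      · simp
      · left
        simp only [Prod.mk.injEq, true_and]
        field_simp
        ring
    · have hr : r * ((1 - n) * (r - 1) / lam + n / (2 - n)) = 0 := by
        field_simp at hR ⊢
        linear_combination hR
      rcases eq_zero_or_eq_of_mul_linear_eq_zero h1n hlam.ne' hr with rfl | rfl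
      · simp
      · right; left
        simp only [Prod.mk.injEq, true_and]
        field_simp
  · rintro (h | h | h | h) <;> simp only [Prod.mk.injEq] at h <;> obtain ⟨rfl, rfl, rfl⟩ := h <;>
      refine ⟨by ring, by field_simp; ring, by field_simp; ring⟩
end

section
/- Let 0 < n < 1 and λ > 0, set r₀ = 1 + 2λ/(2−n), and assume 1/2 − nλ/((1−n)r₀) ≠ 0. Let V̄, Γ̄, Σ̄ : [0, ∞) → ℝ be three-times continuously differentiable with Γ̄ > 0, Σ̄ > 0 and V̄' > 0, satisfying the profile system λ(n/(2−n) V̄ + ξ V̄') = Σ̄', λ(2/(2−n) Γ̄ + ξ Γ̄') = V̄' − Γ̄, Σ̄ = (V̄')ⁿ / Γ̄ on [0, ∞), together with V̄(0) = 0, Γ̄'(0) = 0 and Σ̄'(0) = 0; write Γ̄₀ = Γ̄(0) and Ū₀ = V̄'(0). Define for η ∈ ℝ: p(η) = e^{2η} Γ̄(e^η)/Σ̄(e^η), q(η) = n e^η V̄(e^η)/Σ̄(e^η), r(η) = V̄'(e^η)/Γ̄(e^η). Then Ū₀ = r₀ Γ̄₀, and as η → −∞: e^{−2η} p(η) → Γ̄₀²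 Ū₀^{−n}, e^{−2η} q(η) → n Γ̄₀ Ū₀^{1−n}, and e^{−2η}(r(η) − r₀) → −Γ̄₀ Ū₀^{1−n} · (λ/(1−n)) · (λ/(2−n)) · 1/(1/2 − nλ/((1−n)r₀)). That is, e^{−2η}((p(η), q(η), r(η)) − M₀) → κ X₀₂ with κ = Γ̄₀ Ū₀^{1−n} and X₀₂ = (1/r₀, n, −(λ/(1−n))(λ/(2−n))/(1/2 − nλ/((1−n)r₀))). -/
/-!
Everything is read off the behaviour of the profile at `ξ = 0` up to second order. With
`ξ = e^η`, we have `e^{-2η} p = Γ̄/Σ̄` and `e^{-2η} q = n (V̄/ξ)/Σ̄`, and the `Γ̄`-equation rewrites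
as `V̄'/Γ̄ - r₀ = λ ξ Γ̄'/Γ̄`, so `e^{-2η}(r - r₀) → λ Γ̄''(0)/Γ̄₀`. To find `Γ̄''(0)`,
differentiate the `Γ̄`-equation and `Σ̄ Γ̄ = (V̄')ⁿ` once, divide by `ξ` and let `ξ → 0⁺`;
together with `Σ̄'/ξ → λ (n/(2-n) + 1) Ū₀` from the `Σ̄`-equation this is one linear equation
for `Γ̄''(0)`, whose coefficient vanishes exactly when `1/2 - nλ/((1-n) r₀) = 0`.
-/

open Real Filter Set Topology

theorem HasDerivAt.unique_of_eqOn_Ici {f g : ℝ → ℝ} {f' g' a x : ℝ} (hf : HasDerivAt f f' x)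
    (hg : HasDerivAt g g' x) (hfg : EqOn f g (Ici a)) (hx : a ≤ x) : f' = g' :=
  (uniqueDiffOn_Ici a x hx).eq_deriv _ hf.hasDerivWithinAt
    (hg.hasDerivWithinAt.congr (fun _ hy => hfg hy) (hfg hx))

theorem HasDerivAt.tendsto_div_self_nhdsGT {f : ℝ → ℝ} {a : ℝ} (hf : HasDerivAt f a 0)
    (h0 : f 0 = 0) : Tendsto (fun x => f x / x) (𝓝[>] 0) (𝓝 a) := by
  simpa [h0, div_eq_inv_mul] using hf.tendsto_slope_zero_right

structure IsProfile (n lam : ℝ) (V G S : ℝ → ℝ) : Prop where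
  contDiff_V : ContDiff ℝ 2 V
  contDiff_G : ContDiff ℝ 2 G
  contDiff_S : ContDiff ℝ 1 S
  G_pos : ∀ ξ, 0 ≤ ξ → 0 < G ξ
  deriv_V_pos : ∀ ξ, 0 ≤ ξ → 0 < deriv V ξ
  eq_deriv_S : ∀ ξ, 0 ≤ ξ → lam * (n / (2 - n) * V ξ + ξ * deriv V ξ) = deriv S ξ
  eq_deriv_V_sub_G : ∀ ξ, 0 ≤ ξ → lam * (2 / (2 - n) * G ξ + ξ * deriv G ξ) = deriv V ξ - G ξ
  S_eq : ∀ ξ, 0 ≤ ξ → S ξ = deriv V ξ ^ n / G ξ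
  V_zero : V 0 = 0
  deriv_G_zero : deriv G 0 = 0

namespace IsProfile

variable {n lam : ℝ} {V G S : ℝ → ℝ}

theorem hasDerivAt_V (h : IsProfile n lam V G S) (x : ℝ) : HasDerivAt V (deriv V x) x :=
  (h.contDiff_V.differentiable (by norm_num) x).hasDerivAt

theorem hasDerivAt_deriv_V (h : IsProfile n lam V G S) (x : ℝ) :
    HasDerivAt (deriv V) (deriv (deriv V) x) x :=
  (h.contDiff_V.differentiable_deriv_two x).hasDerivAt

theorem hasDerivAt_G (h : IsProfile n lam V G S) (x : ℝ) : HasDerivAt G (deriv G x) x :=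
  (h.contDiff_G.differentiable (by norm_num) x).hasDerivAt

theorem hasDerivAt_deriv_G (h : IsProfile n lam V G S) (x : ℝ) :
    HasDerivAt (deriv G) (deriv (deriv G) x) x :=
  (h.contDiff_G.differentiable_deriv_two x).hasDerivAt

theorem hasDerivAt_S (h : IsProfile n lam V G S) (x : ℝ) : HasDerivAt S (deriv S x) x :=
  (h.contDiff_S.differentiable one_ne_zero x).hasDerivAt

theorem continuous_deriv_deriv_G (h : IsProfile n lam V G S) : Continuous (deriv (deriv G)) :=
  (h.contDiff_G.deriv' (n := 1)).continuous_deriv_one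

theorem S_pos (h : IsProfile n lam V G S) {ξ : ℝ} (hξ : 0 ≤ ξ) : 0 < S ξ := by
  rw [h.S_eq ξ hξ]
  exact div_pos (rpow_pos_of_pos (h.deriv_V_pos ξ hξ) n) (h.G_pos ξ hξ)

theorem deriv_V_zero (h : IsProfile n lam V G S) :
    deriv V 0 = (1 + 2 * lam / (2 - n)) * G 0 := by
  have := h.eq_deriv_V_sub_G 0 le_rfl
  rw [h.deriv_G_zero] at this
  linear_combination -this

theorem div_sub_eq (h : IsProfile n lam V G S) {ξ : ℝ} (hξ : 0 ≤ ξ) :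
    deriv V ξ / G ξ - (1 + 2 * lam / (2 - n)) = lam * ξ * deriv G ξ / G ξ := by
  have hG := (h.G_pos ξ hξ).ne'
  field_simp
  linear_combination -(h.eq_deriv_V_sub_G ξ hξ)

theorem deriv_deriv_V_eq (h : IsProfile n lam V G S) {ξ : ℝ} (hξ : 0 ≤ ξ) :
    deriv (deriv V) ξ =
      (1 + lam * (2 / (2 - n) + 1)) * deriv G ξ + lam * ξ * deriv (deriv G) ξ := by
  have hlhs := (((h.hasDerivAt_G ξ).const_mul (2 / (2 - n))).add
    ((hasDerivAt_id' ξ).mul (h.hasDerivAt_deriv_G ξ))).const_mul lam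
  have := hlhs.unique_of_eqOn_Ici ((h.hasDerivAt_deriv_V ξ).sub (h.hasDerivAt_G ξ))
    (fun x hx => h.eq_deriv_V_sub_G x hx) hξ
  linear_combination -this

theorem deriv_S_mul_add (h : IsProfile n lam V G S) {ξ : ℝ} (hξ : 0 ≤ ξ) :
    deriv S ξ * G ξ + S ξ * deriv G ξ =
      deriv (deriv V) ξ * n * deriv V ξ ^ (n - 1) := by
  refine ((h.hasDerivAt_S ξ).mul (h.hasDerivAt_G ξ)).unique_of_eqOn_Ici
    ((h.hasDerivAt_deriv_V ξ).rpow_const (Or.inl (h.deriv_V_pos ξ hξ).ne')) (fun x hx => ?_) hξ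
  show S x * G x = deriv V x ^ n
  rw [h.S_eq x hx]
  exact div_mul_cancel₀ _ (h.G_pos x hx).ne'

theorem tendsto_V_div (h : IsProfile n lam V G S) :
    Tendsto (fun x => V x / x) (𝓝[>] 0) (𝓝 (deriv V 0)) :=
  (h.hasDerivAt_V 0).tendsto_div_self_nhdsGT h.V_zero

theorem tendsto_deriv_G_div (h : IsProfile n lam V G S) :
    Tendsto (fun x => deriv G x / x) (𝓝[>] 0) (𝓝 (deriv (deriv G) 0)) :=
  (h.hasDerivAt_deriv_G 0).tendsto_div_self_nhdsGT h.deriv_G_zero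

theorem tendsto_deriv_deriv_V_div (h : IsProfile n lam V G S) :
    Tendsto (fun x => deriv (deriv V) x / x) (𝓝[>] 0)
      (𝓝 ((1 + lam * (2 / (2 - n) + 2)) * deriv (deriv G) 0)) := by
  have hlim := (h.tendsto_deriv_G_div.const_mul (1 + lam * (2 / (2 - n) + 1))).add
    (h.continuous_deriv_deriv_G.continuousWithinAt.tendsto.const_mul lam)
  rw [show (1 + lam * (2 / (2 - n) + 2)) * deriv (deriv G) 0 =
    (1 + lam * (2 / (2 - n) + 1)) * deriv (deriv G) 0 + lam * deriv (deriv G) 0 by ring]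
  refine hlim.congr' ?_
  filter_upwards [self_mem_nhdsWithin] with x (hx : 0 < x)
  rw [h.deriv_deriv_V_eq hx.le]
  field_simp

theorem tendsto_deriv_S_div (h : IsProfile n lam V G S) :
    Tendsto (fun x => deriv S x / x) (𝓝[>] 0) (𝓝 (lam * (n / (2 - n) + 1) * deriv V 0)) := by
  have hlim := ((h.tendsto_V_div.const_mul (n / (2 - n))).add
    (h.contDiff_V.continuous_deriv (by norm_num)).continuousWithinAt.tendsto).const_mul lam
  rw [show lam * (n / (2 - n) + 1) * deriv V 0 =
    lam * (n / (2 - n) * deriv V 0 + deriv V 0) by ring]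
  refine hlim.congr' ?_
  filter_upwards [self_mem_nhdsWithin] with x (hx : 0 < x)
  rw [← h.eq_deriv_S x hx.le]
  field_simp

-- The limit `ξ → 0⁺` of `(Σ̄' Γ̄ + Σ̄ Γ̄')/ξ = n (V̄''/ξ) (V̄')^{n-1}`.
theorem second_order_relation (h : IsProfile n lam V G S) :
    lam * (n / (2 - n) + 1) * deriv V 0 * G 0 + S 0 * deriv (deriv G) 0 =
      (1 + lam * (2 / (2 - n) + 2)) * deriv (deriv G) 0 * n * deriv V 0 ^ (n - 1) := by
  have hlhs := (h.tendsto_deriv_S_div.mul h.contDiff_G.continuous.continuousWithinAt.tendsto).add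
    (h.contDiff_S.continuous.continuousWithinAt.tendsto.mul h.tendsto_deriv_G_div)
  have hrhs := (h.tendsto_deriv_deriv_V_div.mul_const n).mul
    ((h.contDiff_V.continuous_deriv (by norm_num)).continuousWithinAt.tendsto.rpow_const
      (p := n - 1) (Or.inl (h.deriv_V_pos 0 le_rfl).ne'))
  refine tendsto_nhds_unique (hlhs.congr' ?_) hrhs
  filter_upwards [self_mem_nhdsWithin] with x (hx : 0 < x)
  field_simp
  linear_combination h.deriv_S_mul_add hx.le

theorem tendsto_div_sub_div_sq (h : IsProfile n lam V G S) :
    Tendsto (fun x => (deriv V x / G x - (1 + 2 * lam / (2 - n))) / x ^ 2) (𝓝[>] 0)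
      (𝓝 (lam * deriv (deriv G) 0 / G 0)) := by
  refine ((h.tendsto_deriv_G_div.const_mul lam).div
    h.contDiff_G.continuous.continuousWithinAt.tendsto (h.G_pos 0 le_rfl).ne').congr' ?_
  filter_upwards [self_mem_nhdsWithin] with x (hx : 0 < x)
  rw [h.div_sub_eq hx.le, Pi.div_apply]
  field_simp

theorem lam_mul_deriv_deriv_G_zero_div (h : IsProfile n lam V G S) (hn : n < 1)
    (hden : 1 / 2 - n * lam / ((1 - n) * (1 + 2 * lam / (2 - n))) ≠ 0) :
    lam * deriv (deriv G) 0 / G 0 = -(G 0 * deriv V 0 ^ (1 - n)) *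
      ((lam / (1 - n)) * (lam / (2 - n)) *
        (1 / (1 / 2 - n * lam / ((1 - n) * (1 + 2 * lam / (2 - n)))))) := by
  have hG := h.G_pos 0 le_rfl
  have hU := h.deriv_V_pos 0 le_rfl
  have hrel := h.second_order_relation
  rw [h.S_eq 0 le_rfl, h.deriv_V_zero] at hrel
  rw [h.deriv_V_zero] at hU ⊢
  set A := deriv (deriv G) 0
  set Γ := G 0
  set r₀ := 1 + 2 * lam / (2 - n) with hr₀
  have h2n : 2 - n ≠ 0 := by linarith
  have h1n : 1 - n ≠ 0 := by linarith
  have hr₀2n : r₀ * (2 - n) = 2 - n + 2 * lam := by rw [hr₀]; field_simp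
  have hr₀pos : 0 < r₀ := pos_of_mul_pos_left hU hG.le
  have hUn : (r₀ * Γ) ^ n = (r₀ * Γ) ^ (n - 1) * (r₀ * Γ) := by
    rw [← rpow_add_one hU.ne']; ring_nf
  have hU1n : (r₀ * Γ) ^ (1 - n) = ((r₀ * Γ) ^ (n - 1))⁻¹ := by
    rw [← rpow_neg hU.le]; ring_nf
  have hu : 0 < (r₀ * Γ) ^ (n - 1) := rpow_pos_of_pos hU _
  rw [hUn] at hrel
  rw [hU1n]
  set u := (r₀ * Γ) ^ (n - 1)
  clear_value r₀
  have hD : (1 - n) * r₀ - 2 * n * lam ≠ 0 := by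
    contrapose! hden
    field_simp
    linarith
  field_simp at hrel
  have key : 2 * lam * r₀ * Γ ^ 2 = -(A * u * (2 - n) * ((1 - n) * r₀ - 2 * n * lam)) := by
    linear_combination hrel - A * u * n * hr₀2n
  rw [show 1 / 2 - n * lam / ((1 - n) * r₀) = ((1 - n) * r₀ - 2 * n * lam) / (2 * ((1 - n) * r₀))
    by field_simp]
  field_simp
  rw [neg_div', eq_div_iff (by contrapose! hD; linear_combination hD)]
  linear_combination lam * key

theorem tendsto_G_div_S (h : IsProfile n lam V G S) :
    Tendsto (fun x => G x / S x) (𝓝[>] 0) (𝓝 (G 0 ^ 2 * deriv V 0 ^ (-n))) := by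
  have hval : G 0 / S 0 = G 0 ^ 2 * deriv V 0 ^ (-n) := by
    rw [h.S_eq 0 le_rfl, rpow_neg (h.deriv_V_pos 0 le_rfl).le]
    field_simp
  rw [← hval]
  exact h.contDiff_G.continuous.continuousWithinAt.tendsto.div
    h.contDiff_S.continuous.continuousWithinAt.tendsto (h.S_pos le_rfl).ne'

theorem tendsto_V_div_div_S (h : IsProfile n lam V G S) :
    Tendsto (fun x => n * (V x / x) / S x) (𝓝[>] 0)
      (𝓝 (n * (G 0 * deriv V 0 ^ (1 - n)))) := by
  have hU := h.deriv_V_pos 0 le_rfl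
  have hval : n * deriv V 0 / S 0 = n * (G 0 * deriv V 0 ^ (1 - n)) := by
    rw [h.S_eq 0 le_rfl, rpow_sub hU, rpow_one]
    field_simp
  rw [← hval]
  exact (h.tendsto_V_div.const_mul n).div
    h.contDiff_S.continuous.continuousWithinAt.tendsto (h.S_pos le_rfl).ne'

end IsProfile

theorem stmt19_general (n lam : ℝ) (hn1 : n < 1)
    (r₀ : ℝ) (hr₀ : r₀ = 1 + 2 * lam / (2 - n))
    (hden : 1 / 2 - n * lam / ((1 - n) * r₀) ≠ 0)
    (V G S : ℝ → ℝ)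
    (hV : ContDiff ℝ 3 V) (hG : ContDiff ℝ 3 G) (hS : ContDiff ℝ 3 S)
    (hG_pos : ∀ ξ : ℝ, 0 ≤ ξ → 0 < G ξ)
    (hV'_pos : ∀ ξ : ℝ, 0 ≤ ξ → 0 < deriv V ξ)
    (hsys : ∀ ξ : ℝ, 0 ≤ ξ →
      lam * (n / (2 - n) * V ξ + ξ * deriv V ξ) = deriv S ξ ∧
      lam * (2 / (2 - n) * G ξ + ξ * deriv G ξ) = deriv V ξ - G ξ ∧
      S ξ = (deriv V ξ) ^ n / G ξ)
    (hV0 : V 0 = 0) (hG'0 : deriv G 0 = 0)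
    (Γ₀ U₀ : ℝ) (hΓ₀ : Γ₀ = G 0) (hU₀ : U₀ = deriv V 0)
    (p q r : ℝ → ℝ)
    (hp : ∀ η : ℝ, p η = Real.exp (2 * η) * G (Real.exp η) / S (Real.exp η))
    (hq : ∀ η : ℝ, q η = n * Real.exp η * V (Real.exp η) / S (Real.exp η))
    (hr : ∀ η : ℝ, r η = deriv V (Real.exp η) / G (Real.exp η)) :
    U₀ = r₀ * Γ₀ ∧
    Tendsto (fun η => Real.exp (-2 * η) * p η) atBot
      (nhds (Γ₀ ^ 2 * U₀ ^ (-n))) ∧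
    Tendsto (fun η => Real.exp (-2 * η) * q η) atBot
      (nhds (n * (Γ₀ * U₀ ^ (1 - n)))) ∧
    Tendsto (fun η => Real.exp (-2 * η) * (r η - r₀)) atBot
      (nhds (-(Γ₀ * U₀ ^ (1 - n)) * ((lam / (1 - n)) * (lam / (2 - n)) *
        (1 / (1 / 2 - n * lam / ((1 - n) * r₀)))))) := by
  have h : IsProfile n lam V G S :=
    { contDiff_V := hV.of_le (by norm_num)
      contDiff_G := hG.of_le (by norm_num)
      contDiff_S := hS.of_le (by norm_num)
      G_pos := hG_pos
      deriv_V_pos := hV'_pos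
      eq_deriv_S := fun ξ hξ => (hsys ξ hξ).1
      eq_deriv_V_sub_G := fun ξ hξ => (hsys ξ hξ).2.1
      S_eq := fun ξ hξ => (hsys ξ hξ).2.2
      V_zero := hV0
      deriv_G_zero := hG'0 }
  have hexp (η : ℝ) : exp (-2 * η) = (exp η ^ 2)⁻¹ := by
    rw [← exp_nat_mul, ← exp_neg]; push_cast; ring_nf
  subst hr₀ hΓ₀ hU₀
  refine ⟨h.deriv_V_zero, ?_, ?_, ?_⟩
  · refine (h.tendsto_G_div_S.comp tendsto_exp_atBot_nhdsGT).congr fun η => ?_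
    rw [Function.comp_apply, hp, hexp, show 2 * η = (2 : ℕ) * η by norm_num, exp_nat_mul]
    field_simp
  · refine (h.tendsto_V_div_div_S.comp tendsto_exp_atBot_nhdsGT).congr fun η => ?_
    simp only [Function.comp_apply, hq, hexp]
    field_simp
  · rw [← h.lam_mul_deriv_deriv_G_zero_div hn1 hden]
    refine (h.tendsto_div_sub_div_sq.comp tendsto_exp_atBot_nhdsGT).congr fun η => ?_
    simp only [Function.comp_apply, hr, hexp]
    field_simp

/-- the orbit `(p,q,r)` associated with a profile solving the profile system
with the symmetry boundary conditions emanates from `M₀ = (0,0,r₀)` in the direction of the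
eigenvector `X₀₂`, with coefficient `κ = Γ̄₀ Ū₀^{1-n}`:
`e^{-2η}((p,q,r)(η) - M₀) → κ X₀₂` as `η → -∞`. -/
theorem stmt19 (n lam : ℝ) (hn0 : 0 < n) (hn1 : n < 1) (hlam : 0 < lam)
    (r₀ : ℝ) (hr₀ : r₀ = 1 + 2 * lam / (2 - n))
    (hden : 1 / 2 - n * lam / ((1 - n) * r₀) ≠ 0)
    (V G S : ℝ → ℝ)
    (hV : ContDiff ℝ 3 V) (hG : ContDiff ℝ 3 G) (hS : ContDiff ℝ 3 S)
    (hG_pos : ∀ ξ : ℝ, 0 ≤ ξ → 0 < G ξ)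
    (hS_pos : ∀ ξ : ℝ, 0 ≤ ξ → 0 < S ξ)
    (hV'_pos : ∀ ξ : ℝ, 0 ≤ ξ → 0 < deriv V ξ)
    (hsys : ∀ ξ : ℝ, 0 ≤ ξ →
      lam * (n / (2 - n) * V ξ + ξ * deriv V ξ) = deriv S ξ ∧
      lam * (2 / (2 - n) * G ξ + ξ * deriv G ξ) = deriv V ξ - G ξ ∧
      S ξ = (deriv V ξ) ^ n / G ξ)
    (hV0 : V 0 = 0) (hG'0 : deriv G 0 = 0) (hS'0 : deriv S 0 = 0)
    (Γ₀ U₀ : ℝ) (hΓ₀ : Γ₀ = G 0) (hU₀ : U₀ = deriv V 0)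
    (p q r : ℝ → ℝ)
    (hp : ∀ η : ℝ, p η = Real.exp (2 * η) * G (Real.exp η) / S (Real.exp η))
    (hq : ∀ η : ℝ, q η = n * Real.exp η * V (Real.exp η) / S (Real.exp η))
    (hr : ∀ η : ℝ, r η = deriv V (Real.exp η) / G (Real.exp η)) :
    U₀ = r₀ * Γ₀ ∧
    Tendsto (fun η => Real.exp (-2 * η) * p η) atBot
      (nhds (Γ₀ ^ 2 * U₀ ^ (-n))) ∧
    Tendsto (fun η => Real.exp (-2 * η) * q η) atBot
      (nhds (n * (Γ₀ * U₀ ^ (1 - n)))) ∧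
    Tendsto (fun η => Real.exp (-2 * η) * (r η - r₀)) atBot
      (nhds (-(Γ₀ * U₀ ^ (1 - n)) * ((lam / (1 - n)) * (lam / (2 - n)) *
        (1 / (1 / 2 - n * lam / ((1 - n) * r₀)))))) :=
  stmt19_general n lam hn1 r₀ hr₀ hden V G S hV hG hS hG_pos hV'_pos hsys hV0 hG'0 Γ₀ U₀ hΓ₀ hU₀ p q
    r hp hq hr
end
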